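/- arXiv:2005.03218 — 2 statements merged into one kernel-verified Lean document; each statement's English description precedes it below -/
import Mathlib

section
/- Let F = (V; E, A) be a mixed graph and F₁, F₂ families of pairwise disjoint subsets of V. Choose an orientation A'' of E such that every undirected edge with exactly one endpoint in ∪F₁ is oriented into ∪F₁, and among the remaining edges, every edge with exactly one endpoint in ∪F₂ is oriented into ∪F₂. Then e_E(F₁) = ∑_{X∈F₁} d_{A''}^-(X) and e_E(F₂) = ∑_{X∈F₂} d_{A''}^-(X) + |E(F₁, F₂)|, where E(F₁, F₂) is the set of edges with one endpoint in ∪F₁ \ ∪F₂ and the other in ∪F₂ \ ∪F₁. -/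
open scoped Classical

/-- The in-degree `d_A^-(X)`: the number of arcs of the multiset `A` with head
in `X` and tail outside `X`. -/
def dIn {V : Type*} [DecidableEq V] (A : Multiset (V × V)) (X : Finset V) : ℕ :=
  (A.filter (fun a => a.2 ∈ X ∧ a.1 ∉ X)).card

/-- `e_E(P)`: the number of undirected edges of the multiset `E` having one
endpoint in some member of the family `P` and the other endpoint outside that
member. -/
noncomputable def eCross {V : Type*} [DecidableEq V]
    (E : Multiset (Sym2 V)) (P : Finset (Finset V)) : ℕ :=
  (E.filter (fun e => ∃ u v : V, e = s(u, v) ∧ ∃ X ∈ P, u ∈ X ∧ v ∉ X)).card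

/-- `|E(F₁, F₂)|` in terms of the unions `U₁ = ∪F₁`, `U₂ = ∪F₂`: the number of
edges with one endpoint in `U₁ ∖ U₂` and the other in `U₂ ∖ U₁`. -/
noncomputable def eBetween {V : Type*} [DecidableEq V]
    (E : Multiset (Sym2 V)) (U₁ U₂ : Finset V) : ℕ :=
  (E.filter (fun e => ∃ u v : V, e = s(u, v) ∧ u ∈ U₁ \ U₂ ∧ v ∈ U₂ \ U₁)).card

/-- Decomposition of the edge-crossing predicate. -/
lemma edge_cross_iff {V : Type*} [DecidableEq V] (F : Finset (Finset V)) (a b : V) :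
    (∃ u v : V, s(a, b) = s(u, v) ∧ ∃ X ∈ F, u ∈ X ∧ v ∉ X) ↔
      (∃ X ∈ F, a ∈ X ∧ b ∉ X) ∨ (∃ X ∈ F, b ∈ X ∧ a ∉ X) := by
  constructor
  · rintro ⟨u, v, huv, X, hX, hu, hv⟩
    rw [Sym2.eq_iff] at huv
    rcases huv with ⟨rfl, rfl⟩ | ⟨rfl, rfl⟩
    · exact Or.inl ⟨X, hX, hu, hv⟩
    · exact Or.inr ⟨X, hX, hu, hv⟩
  · rintro (⟨X, hX, ha, hb⟩ | ⟨X, hX, hb, ha⟩)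
    · exact ⟨a, b, rfl, X, hX, ha, hb⟩
    · exact ⟨b, a, Sym2.eq_swap, X, hX, hb, ha⟩

lemma edge_between_iff {V : Type*} [DecidableEq V] (U₁ U₂ : Finset V) (a b : V) :
    (∃ u v : V, s(a, b) = s(u, v) ∧ u ∈ U₁ \ U₂ ∧ v ∈ U₂ \ U₁) ↔
      (a ∈ U₁ \ U₂ ∧ b ∈ U₂ \ U₁) ∨ (b ∈ U₁ \ U₂ ∧ a ∈ U₂ \ U₁) := by
  constructor
  · rintro ⟨u, v, huv, hu, hv⟩
    rw [Sym2.eq_iff] at huv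
    rcases huv with ⟨rfl, rfl⟩ | ⟨rfl, rfl⟩
    · exact Or.inl ⟨hu, hv⟩
    · exact Or.inr ⟨hu, hv⟩
  · rintro (⟨ha, hb⟩ | ⟨hb, ha⟩)
    · exact ⟨a, b, rfl, ha, hb⟩
    · exact ⟨b, a, Sym2.eq_swap, hb, ha⟩

/-- In a pairwise disjoint family, a point lies in at most one member. -/
lemma mem_unique {V : Type*} [DecidableEq V] {F : Finset (Finset V)}
    (hF : (F : Set (Finset V)).Pairwise Disjoint) {X Y : Finset V} {a : V}
    (hX : X ∈ F) (hY : Y ∈ F) (haX : a ∈ X) (haY : a ∈ Y) : X = Y := by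
  by_contra h
  exact (Finset.disjoint_left.1 (hF hX hY h)) haX haY

lemma sum_indicator_disjoint {V : Type*} [DecidableEq V] {F : Finset (Finset V)}
    (hF : (F : Set (Finset V)).Pairwise Disjoint) (a b : V) :
    (∑ X ∈ F, if b ∈ X ∧ a ∉ X then 1 else 0) =
      if ∃ X ∈ F, b ∈ X ∧ a ∉ X then 1 else 0 := by
  by_cases h : ∃ X ∈ F, b ∈ X ∧ a ∉ X
  · obtain ⟨X, hX, hb, ha⟩ := h
    rw [if_pos ⟨X, hX, hb, ha⟩]
    rw [Finset.sum_eq_single_of_mem X hX]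
    · rw [if_pos ⟨hb, ha⟩]
    · intro Y hY hne
      rw [if_neg]
      rintro ⟨hbY, -⟩
      exact hne (mem_unique hF hY hX hbY hb)
  · rw [if_neg h, Finset.sum_eq_zero]
    intro X hX
    rw [if_neg]
    intro hc
    exact h ⟨X, hX, hc⟩

lemma sum_dIn {V : Type*} [DecidableEq V] {F : Finset (Finset V)}
    (hF : (F : Set (Finset V)).Pairwise Disjoint) (A : Multiset (V × V)) :
    ∑ X ∈ F, dIn A X =
      (A.filter (fun p : V × V => ∃ X ∈ F, p.2 ∈ X ∧ p.1 ∉ X)).card := by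
  induction A using Multiset.induction_on with
  | empty => simp [dIn]
  | cons p s ih =>
    have hd : ∀ X : Finset V, dIn (p ::ₘ s) X =
        (if p.2 ∈ X ∧ p.1 ∉ X then 1 else 0) + dIn s X := by
      intro X
      simp only [dIn, Multiset.filter_cons]
      split <;> simp [add_comm]
    rw [Multiset.filter_cons]
    simp only [hd, Finset.sum_add_distrib, ih, Multiset.card_add]
    rw [sum_indicator_disjoint hF]
    split <;> simp [add_comm]

/-- Let `F₁, F₂` be families of pairwise disjoint subsets of the vertex set of
a mixed graph, and let `A''` be an orientation of the edge multiset `E` such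
that every edge with exactly one endpoint in `∪F₁` is oriented into `∪F₁`, and
among the remaining edges every edge with exactly one endpoint in `∪F₂` is
oriented into `∪F₂`.  Then `e_E(F₁) = ∑_{X ∈ F₁} d_{A''}^-(X)` and
`e_E(F₂) = ∑_{X ∈ F₂} d_{A''}^-(X) + |E(F₁, F₂)|`. -/
theorem orientation_crossing_counts
    {V : Type*} [Fintype V] [DecidableEq V]
    (E : Multiset (Sym2 V))
    (F₁ F₂ : Finset (Finset V))
    (h₁ : (F₁ : Set (Finset V)).Pairwise Disjoint)
    (h₂ : (F₂ : Set (Finset V)).Pairwise Disjoint)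
    (A'' : Multiset (V × V)) (hor : A''.map (fun p => s(p.1, p.2)) = E)
    (hrule₁ : ∀ p ∈ A'', p.1 ∈ F₁.sup id → p.2 ∈ F₁.sup id)
    (hrule₂ : ∀ p ∈ A'', (p.1 ∈ F₁.sup id ↔ p.2 ∈ F₁.sup id) →
      p.1 ∈ F₂.sup id → p.2 ∈ F₂.sup id) :
    eCross E F₁ = ∑ X ∈ F₁, dIn A'' X ∧
      eCross E F₂ = (∑ X ∈ F₂, dIn A'' X) + eBetween E (F₁.sup id) (F₂.sup id) := by
  rename_i instF instD
  clear instF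
  subst hor
  have memU : ∀ (F : Finset (Finset V)) (a : V), a ∈ F.sup id ↔ ∃ X ∈ F, a ∈ X := by
    intro F a; simp [Finset.mem_sup]
  set btw : V × V → Prop := fun p =>
    (p.1 ∈ F₁.sup id \ F₂.sup id ∧ p.2 ∈ F₂.sup id \ F₁.sup id) ∨
      (p.2 ∈ F₁.sup id \ F₂.sup id ∧ p.1 ∈ F₂.sup id \ F₁.sup id) with hbtw
  -- pointwise equivalences on arcs of A''
  have cr1 : ∀ p ∈ A'',
      ((∃ u v : V, s(p.1, p.2) = s(u, v) ∧ ∃ X ∈ F₁, u ∈ X ∧ v ∉ X) ↔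
        ∃ X ∈ F₁, p.2 ∈ X ∧ p.1 ∉ X) := by
    intro p hp
    rw [edge_cross_iff]
    constructor
    · rintro (⟨X, hX, hx1, hx2⟩ | h)
      · have hU : p.2 ∈ F₁.sup id :=
          hrule₁ p hp ((memU F₁ p.1).2 ⟨X, hX, hx1⟩)
        obtain ⟨Y, hY, hY2⟩ := (memU F₁ p.2).1 hU
        refine ⟨Y, hY, hY2, fun h1Y => ?_⟩
        exact hx2 (mem_unique h₁ hY hX h1Y hx1 ▸ hY2)
      · exact h
    · exact Or.inr
  have hbtwne : ∀ p ∈ A'', btw p → ¬∃ X ∈ F₂, p.2 ∈ X ∧ p.1 ∉ X := by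
    rintro p hp (⟨hb1, hb2⟩ | ⟨hb1, hb2⟩) ⟨X, hX, hX2, hX1⟩
    · exact (Finset.mem_sdiff.1 hb2).2 (hrule₁ p hp (Finset.mem_sdiff.1 hb1).1)
    · exact (Finset.mem_sdiff.1 hb1).2 ((memU F₂ p.2).2 ⟨X, hX, hX2⟩)
  have cr2 : ∀ p ∈ A'',
      ((∃ u v : V, s(p.1, p.2) = s(u, v) ∧ ∃ X ∈ F₂, u ∈ X ∧ v ∉ X) ↔
        ((∃ X ∈ F₂, p.2 ∈ X ∧ p.1 ∉ X) ∨ btw p)) := by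
    intro p hp
    rw [edge_cross_iff]
    constructor
    · rintro (⟨X, hX, hx1, hx2⟩ | h)
      · by_cases hiff : p.1 ∈ F₁.sup id ↔ p.2 ∈ F₁.sup id
        · have hU : p.2 ∈ F₂.sup id :=
            hrule₂ p hp hiff ((memU F₂ p.1).2 ⟨X, hX, hx1⟩)
          obtain ⟨Y, hY, hY2⟩ := (memU F₂ p.2).1 hU
          refine Or.inl ⟨Y, hY, hY2, fun h1Y => ?_⟩
          exact hx2 (mem_unique h₂ hY hX h1Y hx1 ▸ hY2)
        · have h1n : p.1 ∉ F₁.sup id := fun h1U =>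
            hiff ⟨fun _ => hrule₁ p hp h1U, fun _ => h1U⟩
          have h2U : p.2 ∈ F₁.sup id := by
            by_contra h2n
            exact hiff ⟨fun h => absurd h h1n, fun h => absurd h h2n⟩
          by_cases h2in : p.2 ∈ F₂.sup id
          · obtain ⟨Y, hY, hY2⟩ := (memU F₂ p.2).1 h2in
            refine Or.inl ⟨Y, hY, hY2, fun h1Y => ?_⟩
            exact hx2 (mem_unique h₂ hY hX h1Y hx1 ▸ hY2)
          · exact Or.inr (Or.inr ⟨Finset.mem_sdiff.2 ⟨h2U, h2in⟩,
              Finset.mem_sdiff.2 ⟨(memU F₂ p.1).2 ⟨X, hX, hx1⟩, h1n⟩⟩)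
      · exact Or.inl h
    · rintro (h | hb)
      · exact Or.inr h
      · rcases hb with ⟨hb1, hb2⟩ | ⟨hb1, hb2⟩
        · exact absurd (hrule₁ p hp (Finset.mem_sdiff.1 hb1).1)
            (Finset.mem_sdiff.1 hb2).2
        · obtain ⟨X, hX, hX1⟩ := (memU F₂ p.1).1 (Finset.mem_sdiff.1 hb2).1
          refine Or.inl ⟨X, hX, hX1, fun h2X => ?_⟩
          exact (Finset.mem_sdiff.1 hb1).2 ((memU F₂ p.2).2 ⟨X, hX, h2X⟩)
  have crb : ∀ p ∈ A'',
      ((∃ u v : V, s(p.1, p.2) = s(u, v) ∧ u ∈ F₁.sup id \ F₂.sup id ∧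
          v ∈ F₂.sup id \ F₁.sup id) ↔ btw p) := by
    intro p _
    rw [edge_between_iff, hbtw]
  constructor
  · -- first equality
    rw [eCross, Multiset.filter_map, Multiset.card_map, sum_dIn h₁]
    refine congrArg _ ?_
    apply Multiset.filter_congr
    exact cr1
  · -- second equality
    rw [eCross, eBetween, Multiset.filter_map, Multiset.filter_map,
      Multiset.card_map, Multiset.card_map, sum_dIn h₂]
    have key : (A''.filter (fun p : V × V =>
          (∃ X ∈ F₂, p.2 ∈ X ∧ p.1 ∉ X) ∨ btw p)).card =
        (A''.filter (fun p : V × V => ∃ X ∈ F₂, p.2 ∈ X ∧ p.1 ∉ X)).card +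
          (A''.filter btw).card := by
      have h := Multiset.filter_add_filter
        (fun p : V × V => ∃ X ∈ F₂, p.2 ∈ X ∧ p.1 ∉ X) btw A''
      have h0 : Multiset.filter (fun p : V × V =>
          (∃ X ∈ F₂, p.2 ∈ X ∧ p.1 ∉ X) ∧ btw p) A'' = 0 :=
        Multiset.filter_eq_nil.2 (fun p hp hc => hbtwne p hp hc.2 hc.1)
      have h' := congrArg Multiset.card h
      rw [Multiset.card_add, Multiset.card_add, h0, Multiset.card_zero,
        add_zero] at h'
      exact h'.symm
    refine Eq.trans ?_ (Eq.trans key ?_)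
    · refine congrArg _ ?_
      apply Multiset.filter_congr
      exact cr2
    · refine congrArg₂ (· + ·) ?_ ?_
      · refine congrArg _ ?_
        apply Multiset.filter_congr
        exact fun p _ => Iff.rfl
      · refine congrArg _ ?_
        apply Multiset.filter_congr
        exact fun p hp => (crb p hp).symm
end

section
/- Let Ω be a finite set and F₁, F₂ families of pairwise disjoint subsets of Ω. Apply PIEOs (of any of the three types) starting from F₁ ⊎ F₂ until a laminar family G is reached; let F₃ be the maximal members of G and F₄ = G \ F₃. Then ∪F₄ ⊆ (∪F₁) ∩ (∪F₂), with equality if and only if every operation used was of Type 1. -/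
open scoped Classical
/-- Two finite sets properly intersect if their intersection and both
differences are nonempty. -/
def ProperlyIntersecting {α : Type*} [DecidableEq α] (X Y : Finset α) : Prop :=
  (X ∩ Y).Nonempty ∧ (X \ Y).Nonempty ∧ (Y \ X).Nonempty

/-- Type-1 PIEO: replace a properly intersecting pair `X, Y` by `X ∪ Y` and `X ∩ Y`. -/
def Uncross1 {α : Type*} [DecidableEq α] (G G' : Multiset (Finset α)) : Prop :=
  ∃ X Y : Finset α, ∃ H : Multiset (Finset α), ProperlyIntersecting X Y ∧
    G = X ::ₘ Y ::ₘ H ∧ G' = (X ∪ Y) ::ₘ (X ∩ Y) ::ₘ H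

/-- Type-2 PIEO: replace a properly intersecting pair `X, Y` by `X ∪ Y`. -/
def Uncross2 {α : Type*} [DecidableEq α] (G G' : Multiset (Finset α)) : Prop :=
  ∃ X Y : Finset α, ∃ H : Multiset (Finset α), ProperlyIntersecting X Y ∧
    G = X ::ₘ Y ::ₘ H ∧ G' = (X ∪ Y) ::ₘ H

/-- Type-3 PIEO: replace a properly intersecting pair `X, Y` by `X ∩ Y`. -/
def Uncross3 {α : Type*} [DecidableEq α] (G G' : Multiset (Finset α)) : Prop :=
  ∃ X Y : Finset α, ∃ H : Multiset (Finset α), ProperlyIntersecting X Y ∧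
    G = X ::ₘ Y ::ₘ H ∧ G' = (X ∩ Y) ::ₘ H

/-- A PIEO step of any of the three types. -/
def PIEOStep {α : Type*} [DecidableEq α] (G G' : Multiset (Finset α)) : Prop :=
  Uncross1 G G' ∨ Uncross2 G G' ∨ Uncross3 G G'

/-- A multiset family is laminar if it contains no properly intersecting pair. -/
def Laminar {α : Type*} [DecidableEq α] (G : Multiset (Finset α)) : Prop :=
  ∀ X ∈ G, ∀ Y ∈ G, ¬ ProperlyIntersecting X Y


namespace PIEOAux

variable {α : Type*} [DecidableEq α]

/-- `c x G` is the number of members of `G` (with multiplicity) containing `x`. -/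
def c (x : α) (G : Multiset (Finset α)) : ℕ := Multiset.countP (fun X => x ∈ X) G

lemma c_cons (x : α) (X : Finset α) (G : Multiset (Finset α)) :
    c x (X ::ₘ G) = c x G + (if x ∈ X then 1 else 0) := Multiset.countP_cons _ _ _

lemma c_add (x : α) (G G' : Multiset (Finset α)) : c x (G + G') = c x G + c x G' :=
  Multiset.countP_add _ _ _

lemma c_pos (x : α) (G : Multiset (Finset α)) : 0 < c x G ↔ ∃ Z ∈ G, x ∈ Z :=
  Multiset.countP_pos

lemma c_step_le {G G' : Multiset (Finset α)} (h : PIEOStep G G') (x : α) :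
    c x G' ≤ c x G := by
  rcases h with ⟨X, Y, H, hPI, rfl, rfl⟩ | ⟨X, Y, H, hPI, rfl, rfl⟩ | ⟨X, Y, H, hPI, rfl, rfl⟩ <;>
    simp only [c_cons, Finset.mem_union, Finset.mem_inter] <;>
    split_ifs <;> first | omega | tauto

lemma c_step1_eq {G G' : Multiset (Finset α)} (h : Uncross1 G G') (x : α) :
    c x G' = c x G := by
  obtain ⟨X, Y, H, hPI, rfl, rfl⟩ := h
  simp only [c_cons, Finset.mem_union, Finset.mem_inter]
  split_ifs <;> first | omega | tauto

lemma c_le_one_of_pairwise {F : Finset (Finset α)}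
    (h : (F : Set (Finset α)).Pairwise Disjoint) (x : α) : c x F.val ≤ 1 := by
  have : c x F.val = (F.filter (fun X => x ∈ X)).card := by
    rw [c, Multiset.countP_eq_card_filter]; rfl
  rw [this]
  apply Finset.card_le_one.2
  intro a ha b hb
  simp only [Finset.mem_filter] at ha hb
  by_contra hne
  exact Finset.disjoint_left.1 (h ha.1 hb.1 hne) ha.2 hb.2

lemma mem_sup_id (F : Finset (Finset α)) (x : α) :
    x ∈ F.sup id ↔ 0 < c x F.val := by
  rw [c_pos, Finset.mem_sup]; rfl

lemma mem_msup (s : Multiset (Finset α)) (x : α) :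
    x ∈ s.sup ↔ 0 < c x s := by
  rw [c_pos]
  have : s.sup = s.toFinset.sup id := by
    rw [Finset.sup_def, Multiset.toFinset_val, Multiset.map_id, Multiset.sup_dedup]
  rw [this, Finset.mem_sup]
  simp

end PIEOAux


/-- Let `F₁, F₂` be families of pairwise disjoint subsets of a finite set, and
apply PIEOs (of any of the three types) starting from `F₁ ⊎ F₂` until a laminar
family is reached; let `F₃` be the maximal members of the final family and `F₄`
the rest.  Then `∪F₄ ⊆ (∪F₁) ∩ (∪F₂)`, with equality if and only if every
operation used was of Type 1. -/
theorem PIEO_union_of_nonmaximal {α : Type*} [Fintype α] [DecidableEq α]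
    (F₁ F₂ : Finset (Finset α))
    (h₁ : (F₁ : Set (Finset α)).Pairwise Disjoint)
    (h₂ : (F₂ : Set (Finset α)).Pairwise Disjoint)
    (n : ℕ) (Gs : ℕ → Multiset (Finset α))
    (hstart : Gs 0 = F₁.val + F₂.val)
    (hstep : ∀ i < n, PIEOStep (Gs i) (Gs (i + 1)))
    (hlam : Laminar (Gs n))
    (F₃ : Finset (Finset α)) (F₄ : Multiset (Finset α))
    (hF₃ : F₃ = (Gs n).toFinset.filter (fun X => ∀ Y ∈ Gs n, ¬ X ⊂ Y))
    (hF₄ : F₄ = Gs n - F₃.val) :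
    F₄.sup ⊆ F₁.sup id ∩ F₂.sup id ∧
      (F₄.sup = F₁.sup id ∩ F₂.sup id ↔ ∀ i < n, Uncross1 (Gs i) (Gs (i + 1))) := by
  classical
  -- counts are monotone along the chain
  have hchain : ∀ i j, i ≤ j → j ≤ n → ∀ x, PIEOAux.c x (Gs j) ≤ PIEOAux.c x (Gs i) := by
    intro i j hij hjn x
    induction j with
    | zero => have : i = 0 := Nat.le_zero.1 hij; simp [this]
    | succ j ih =>
      rcases eq_or_lt_of_le hij with h | h
      · simp [h]
      · have h1 : PIEOAux.c x (Gs (j + 1)) ≤ PIEOAux.c x (Gs j) :=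
          PIEOAux.c_step_le (hstep j (by omega)) x
        exact h1.trans (ih (by omega) (by omega))
  have hc0 : ∀ x, PIEOAux.c x (Gs 0) = PIEOAux.c x F₁.val + PIEOAux.c x F₂.val := by
    intro x; rw [hstart]; exact PIEOAux.c_add x _ _
  have hc1 : ∀ x, PIEOAux.c x F₁.val ≤ 1 := PIEOAux.c_le_one_of_pairwise h₁
  have hc2 : ∀ x, PIEOAux.c x F₂.val ≤ 1 := PIEOAux.c_le_one_of_pairwise h₂
  have hc0le : ∀ x, PIEOAux.c x (Gs 0) ≤ 2 := by
    intro x; rw [hc0 x]; have := hc1 x; have := hc2 x; omega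
  have hF₃mem : ∀ Z ∈ F₃, Z ∈ Gs n ∧ ∀ Y ∈ Gs n, ¬ Z ⊂ Y := by
    intro Z hZ
    rw [hF₃, Finset.mem_filter, Multiset.mem_toFinset] at hZ
    exact hZ
  have hsub : F₃.val ≤ Gs n := by
    have h1 : F₃ ⊆ (Gs n).toFinset := by
      rw [hF₃]; exact Finset.filter_subset _ _
    calc F₃.val ≤ (Gs n).toFinset.val := Finset.val_le_iff.2 h1
    _ = (Gs n).dedup := rfl
    _ ≤ Gs n := Multiset.dedup_le _
  have hsplit : F₄ + F₃.val = Gs n := by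
    rw [hF₄]; exact tsub_add_cancel_of_le hsub
  -- at most one maximal member contains any given point
  have hF3le1 : ∀ x, PIEOAux.c x F₃.val ≤ 1 := by
    intro x
    have hcard : PIEOAux.c x F₃.val = (F₃.filter (fun X => x ∈ X)).card := by
      rw [PIEOAux.c, Multiset.countP_eq_card_filter]; rfl
    rw [hcard]
    apply Finset.card_le_one.2
    intro a ha b hb
    simp only [Finset.mem_filter] at ha hb
    obtain ⟨haG, hamax⟩ := hF₃mem a ha.1
    obtain ⟨hbG, hbmax⟩ := hF₃mem b hb.1
    by_contra hne
    have hnPI := hlam a haG b hbG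
    rw [ProperlyIntersecting] at hnPI
    push_neg at hnPI
    have hI : (a ∩ b).Nonempty := ⟨x, Finset.mem_inter.2 ⟨ha.2, hb.2⟩⟩
    by_cases hab : (a \ b).Nonempty
    · have hba : b \ a = ∅ := hnPI hI hab
      have : b ⊂ a := Finset.ssubset_iff_of_subset (by
          rwa [Finset.sdiff_eq_empty_iff_subset] at hba) |>.2 (by
          obtain ⟨y, hy⟩ := hab
          exact ⟨y, (Finset.mem_sdiff.1 hy).1, (Finset.mem_sdiff.1 hy).2⟩)
      exact hbmax a haG this
    · have : a ⊂ b := by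
        rw [Finset.not_nonempty_iff_eq_empty, Finset.sdiff_eq_empty_iff_subset] at hab
        exact lt_of_le_of_ne hab hne
      exact hamax b hbG this
  -- key characterisation of the union of F₄
  have hkey : ∀ x, x ∈ F₄.sup ↔ 2 ≤ PIEOAux.c x (Gs n) := by
    intro x
    rw [PIEOAux.mem_msup]
    constructor
    · intro hpos
      obtain ⟨Z, hZF₄, hxZ⟩ := (PIEOAux.c_pos x F₄).1 hpos
      have hZG : Z ∈ Gs n := by
        have : F₄ ≤ Gs n := hF₄ ▸ tsub_le_self
        exact Multiset.mem_of_le this hZF₄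
      -- find a maximal member above Z
      have hS : ((Gs n).toFinset.filter (fun Y => Z ⊆ Y)).Nonempty :=
        ⟨Z, Finset.mem_filter.2 ⟨Multiset.mem_toFinset.2 hZG, Finset.Subset.refl Z⟩⟩
      obtain ⟨M, hMS, hMmax'⟩ := Finset.exists_maximal hS
      have hMmax : ∀ Y ∈ (Gs n).toFinset.filter (fun Y => Z ⊆ Y), ¬ M < Y :=
        fun Y hY hlt => (lt_irrefl M) (lt_of_lt_of_le hlt (hMmax' hY hlt.le))
      simp only [Finset.mem_filter, Multiset.mem_toFinset] at hMS
      have hMF₃ : M ∈ F₃ := by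
        rw [hF₃, Finset.mem_filter, Multiset.mem_toFinset]
        refine ⟨hMS.1, fun Y hY hMY => ?_⟩
        exact hMmax Y (Finset.mem_filter.2 ⟨Multiset.mem_toFinset.2 hY,
          hMS.2.trans hMY.subset⟩) hMY
      have h2 : 0 < PIEOAux.c x F₃.val :=
        (PIEOAux.c_pos x F₃.val).2 ⟨M, hMF₃, hMS.2 hxZ⟩
      have := PIEOAux.c_add x F₄ F₃.val
      rw [hsplit] at this
      omega
    · intro h2
      have := PIEOAux.c_add x F₄ F₃.val
      rw [hsplit] at this
      have := hF3le1 x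
      omega
  have hsubset : F₄.sup ⊆ F₁.sup id ∩ F₂.sup id := by
    intro x hx
    have h2 : 2 ≤ PIEOAux.c x (Gs n) := (hkey x).1 hx
    have hle : PIEOAux.c x (Gs n) ≤ PIEOAux.c x (Gs 0) := hchain 0 n (Nat.zero_le n) le_rfl x
    have := hc0 x; have := hc1 x; have := hc2 x
    rw [Finset.mem_inter, PIEOAux.mem_sup_id, PIEOAux.mem_sup_id]
    omega
  refine ⟨hsubset, ?_, ?_⟩
  · -- equality implies all steps are of type 1
    intro hEq i hi
    by_contra h1
    rcases hstep i hi with h | h | h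
    · exact h1 h
    all_goals {
      obtain ⟨X, Y, H, hPI, hGi, hGi1⟩ := h
      obtain ⟨x, hx⟩ := hPI.1
      rw [Finset.mem_inter] at hx
      have h2i : PIEOAux.c x (Gs i) = PIEOAux.c x H + 2 := by
        rw [hGi, PIEOAux.c_cons, PIEOAux.c_cons, if_pos hx.1, if_pos hx.2]
      have hile : PIEOAux.c x (Gs i) ≤ PIEOAux.c x (Gs 0) :=
        hchain 0 i (Nat.zero_le i) (by omega) x
      have hH0 : PIEOAux.c x H = 0 := by have := hc0le x; omega
      have hi1 : PIEOAux.c x (Gs (i + 1)) = 1 := by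
        rw [hGi1, PIEOAux.c_cons, hH0, if_pos]
        simp [Finset.mem_union, Finset.mem_inter, hx.1, hx.2]
      have hnle : PIEOAux.c x (Gs n) ≤ 1 := by
        have := hchain (i + 1) n (by omega) le_rfl x
        omega
      have hxnot : x ∉ F₄.sup := fun hxs => by have := (hkey x).1 hxs; omega
      have hx0 : PIEOAux.c x (Gs 0) = 2 := by have := hc0le x; omega
      have hxin : x ∈ F₁.sup id ∩ F₂.sup id := by
        have := hc0 x; have := hc1 x; have := hc2 x
        rw [Finset.mem_inter, PIEOAux.mem_sup_id, PIEOAux.mem_sup_id]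
        omega
      rw [hEq] at hxnot
      exact hxnot hxin
    }
  · -- all steps of type 1 implies equality
    intro hall
    have hceq : ∀ j ≤ n, ∀ x, PIEOAux.c x (Gs j) = PIEOAux.c x (Gs 0) := by
      intro j hj x
      induction j with
      | zero => rfl
      | succ j ih =>
        rw [PIEOAux.c_step1_eq (hall j (by omega)) x, ih (by omega)]
    apply Finset.Subset.antisymm hsubset
    intro x hx
    rw [Finset.mem_inter, PIEOAux.mem_sup_id, PIEOAux.mem_sup_id] at hx
    rw [hkey x, hceq n le_rfl x, hc0 x]
    have := hc1 x; have := hc2 x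
    omega
end
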